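/- Let q ≥ 2 and θ > 0 be real numbers, and for d ∈ ℕ define μ(d) = q^{ −½(d − (½ − log_q θ))² + ½(½ − log_q θ)² } · (q^{−(d+1)}; q^{−1})_∞ / [ (q^{−1}; q^{−1})_∞ · (−θ^{−1}; q^{−1})_∞ ]. Then ∑_{d=0}^{∞} μ(d) = 1. -/

import Mathlib

/-!
With `x = q⁻¹` and `z = θ⁻¹`, the Gaussian factor of `μ(d)` is `x^{d(d-1)/2} zᵈ` and
`(x^{d+1}; x)_∞ / (x; x)_∞ = 1 / (x; x)_d`, so the claim is Euler's identity
`∑_d x^{d(d-1)/2} zᵈ / (x; x)_d = (-z; x)_∞`. Both sides satisfy `f z = (1 + z) f (x z)`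
and tend to `1` as `z → 0` (Tannery's theorem for the series and for the product).
Iterating the equation gives `f z · g (xⁿ z) = g z · f (xⁿ z)` for two such functions,
and `n → ∞` gives `f = g`.
-/

/-- The infinite `q`-Pochhammer symbol `(a; x)_∞ = ∏_{i=0}^∞ (1 − a xⁱ)`. -/
noncomputable def qPochInf (a x : ℝ) : ℝ := ∏' i : ℕ, (1 - a * x ^ i)

/-- `μ(d) = q^{−½(d−(½−log_q θ))² + ½(½−log_q θ)²} (q^{−(d+1)}; q⁻¹)_∞ /
  ((q⁻¹; q⁻¹)_∞ (−θ⁻¹; q⁻¹)_∞)`. -/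
noncomputable def grassMu (q θ : ℝ) (d : ℕ) : ℝ :=
  q ^ (-(1 / 2 : ℝ) * ((d : ℝ) - (1 / 2 - Real.log θ / Real.log q)) ^ 2
        + (1 / 2 : ℝ) * (1 / 2 - Real.log θ / Real.log q) ^ 2) *
    qPochInf (q⁻¹ ^ (d + 1)) q⁻¹ /
    (qPochInf q⁻¹ q⁻¹ * qPochInf (-θ⁻¹) q⁻¹)

open Filter Topology Finset

noncomputable def qPoch (a x : ℝ) (n : ℕ) : ℝ := ∏ i ∈ range n, (1 - a * x ^ i)

lemma qPoch_succ (a x : ℝ) (n : ℕ) : qPoch a x (n + 1) = qPoch a x n * (1 - a * x ^ n) :=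
  prod_range_succ _ _

lemma mul_pow_ne_one {a x : ℝ} (ha : |a| < 1) (hx : |x| ≤ 1) (i : ℕ) : a * x ^ i ≠ 1 := by
  refine ne_of_lt (lt_of_abs_lt ?_)
  rw [abs_mul, abs_pow]
  exact (mul_le_of_le_one_right (abs_nonneg a) (pow_le_one₀ (abs_nonneg x) hx)).trans_lt ha

lemma qPoch_ne_zero {a x : ℝ} (ha : |a| < 1) (hx : |x| ≤ 1) (n : ℕ) : qPoch a x n ≠ 0 :=
  prod_ne_zero_iff.2 fun i _ => sub_ne_zero.2 (mul_pow_ne_one ha hx i).symm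

section qPochInf

variable {x : ℝ} (hx : |x| < 1)
include hx

lemma multipliable_one_sub_mul_pow (a : ℝ) : Multipliable fun i : ℕ => 1 - a * x ^ i := by
  simpa only [sub_eq_add_neg] using
    Real.multipliable_one_add_of_summable ((summable_geometric_of_abs_lt_one hx).mul_left a).neg

lemma qPochInf_eq_one_sub_mul (a : ℝ) : qPochInf a x = (1 - a) * qPochInf (a * x) x := by
  have hshift : (fun i : ℕ => 1 - a * x ^ (i + 1)) = fun i => 1 - a * x * x ^ i := by
    ext i; ring
  unfold qPochInf
  rw [tprod_eq_zero_mul' (hshift ▸ multipliable_one_sub_mul_pow hx (a * x)), hshift,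
    pow_zero, mul_one]

lemma qPochInf_eq_qPoch_mul (a : ℝ) (n : ℕ) :
    qPochInf a x = qPoch a x n * qPochInf (a * x ^ n) x := by
  induction n with
  | zero => simp [qPoch]
  | succ n ih =>
    rw [ih, qPochInf_eq_one_sub_mul hx, qPoch_succ, pow_succ, mul_assoc, mul_assoc]

lemma qPochInf_ne_zero {a : ℝ} (ha : ∀ i, a * x ^ i ≠ 1) : qPochInf a x ≠ 0 := by
  have hsum : Summable fun i : ℕ => ‖-(a * x ^ i)‖ := by
    simpa [abs_mul] using (summable_geometric_of_lt_one (abs_nonneg x) hx).mul_left |a|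
  simpa only [qPochInf, sub_eq_add_neg] using
    tprod_one_add_ne_zero_of_summable
      (fun i => by rw [← sub_eq_add_neg]; exact sub_ne_zero.2 (ha i).symm) hsum

lemma tendsto_qPochInf_nhds_zero : Tendsto (fun a => qPochInf a x) (𝓝 0) (𝓝 1) := by
  have key := tendsto_tprod_one_add_of_dominated_convergence (𝓕 := 𝓝 (0 : ℝ))
    (f := fun a i => -(a * x ^ i)) (g := fun _ => 0)
    (summable_geometric_of_lt_one (abs_nonneg x) hx)
    (fun i => by simpa using ((continuous_mul_const (x ^ i)).tendsto 0).neg)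
    (by
      filter_upwards [Metric.closedBall_mem_nhds (0 : ℝ) one_pos] with a ha i
      rw [Metric.mem_closedBall, dist_zero_right] at ha
      rw [norm_neg, norm_mul, norm_pow, Real.norm_eq_abs]
      exact mul_le_of_le_one_left (by positivity) ha)
  simpa only [qPochInf, sub_eq_add_neg, add_zero, tprod_one] using key

end qPochInf

noncomputable def eulerCoeff (x : ℝ) (d : ℕ) : ℝ := x ^ d.choose 2 / qPoch x x d

noncomputable def eulerSeries (x z : ℝ) : ℝ := ∑' d, eulerCoeff x d * z ^ d

section Euler

variable {x : ℝ} (hx : |x| < 1)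
include hx

lemma eulerCoeff_succ_mul (d : ℕ) :
    eulerCoeff x (d + 1) * (1 - x * x ^ d) = eulerCoeff x d * x ^ d := by
  have hpoch := qPoch_ne_zero hx hx.le d
  have hfactor : 1 - x * x ^ d ≠ 0 := sub_ne_zero.2 (mul_pow_ne_one hx hx.le d).symm
  have hchoose : (d + 1).choose 2 = d.choose 2 + d := by
    rw [Nat.choose_succ_succ', Nat.choose_one_right, add_comm]
  rw [eulerCoeff, eulerCoeff, qPoch_succ, hchoose, ← div_div, div_mul_cancel₀ _ hfactor,
    pow_add, mul_div_right_comm]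

lemma summable_eulerCoeff_mul_pow (z : ℝ) : Summable fun d => eulerCoeff x d * z ^ d := by
  refine summable_of_ratio_norm_eventually_le (r := 1 / 2) (by norm_num) ?_
  have hgap : 0 < 1 - |x| := sub_pos.2 hx
  have hsmall : Tendsto (fun d : ℕ => |x| ^ d * |z|) atTop (𝓝 0) := by
    simpa using (tendsto_pow_atTop_nhds_zero_of_lt_one (abs_nonneg x) hx).mul_const |z|
  filter_upwards [hsmall.eventually_le_const (half_pos hgap)] with d hd
  have hden : 1 - |x| ≤ |1 - x * x ^ d| := by
    have hle : |x * x ^ d| ≤ |x| := by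
      rw [abs_mul, abs_pow]
      exact mul_le_of_le_one_right (abs_nonneg x) (pow_le_one₀ (abs_nonneg x) hx.le)
    have := abs_sub_abs_le_abs_sub 1 (x * x ^ d)
    rw [abs_one] at this
    linarith
  have hratio : ‖eulerCoeff x (d + 1) * z ^ (d + 1)‖ * |1 - x * x ^ d|
      = ‖eulerCoeff x d * z ^ d‖ * (|x| ^ d * |z|) := by
    simp only [Real.norm_eq_abs, ← abs_pow, ← abs_mul]
    congr 1
    linear_combination z ^ (d + 1) * eulerCoeff_succ_mul hx d
  refine le_of_mul_le_mul_right ?_ (hgap.trans_le hden)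
  rw [hratio]
  calc ‖eulerCoeff x d * z ^ d‖ * (|x| ^ d * |z|)
      ≤ ‖eulerCoeff x d * z ^ d‖ * ((1 - |x|) / 2) := by gcongr
    _ ≤ 1 / 2 * ‖eulerCoeff x d * z ^ d‖ * |1 - x * x ^ d| := by
      nlinarith [norm_nonneg (eulerCoeff x d * z ^ d)]

lemma eulerSeries_eq_one_add_mul (z : ℝ) :
    eulerSeries x z = (1 + z) * eulerSeries x (x * z) := by
  have hz := summable_eulerCoeff_mul_pow hx z
  have hxz := summable_eulerCoeff_mul_pow hx (x * z)
  have hdiff : eulerSeries x z - eulerSeries x (x * z) = z * eulerSeries x (x * z) := by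
    rw [eulerSeries, eulerSeries, ← hz.tsum_sub hxz, (hz.sub hxz).tsum_eq_zero_add,
      ← tsum_mul_left]
    simp only [pow_zero, mul_one, sub_self, zero_add]
    exact tsum_congr fun d => by linear_combination z ^ (d + 1) * eulerCoeff_succ_mul hx d
  linear_combination hdiff

lemma tendsto_eulerSeries_nhds_zero : Tendsto (eulerSeries x) (𝓝 0) (𝓝 1) := by
  have key := tendsto_tsum_of_dominated_convergence (𝓕 := 𝓝 (0 : ℝ))
    (f := fun w d => eulerCoeff x d * w ^ d) (g := fun d => eulerCoeff x d * 0 ^ d)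
    (by simpa using (summable_eulerCoeff_mul_pow hx 1).abs)
    (fun d => ((continuous_pow d).tendsto 0).const_mul _)
    (by
      filter_upwards [Metric.closedBall_mem_nhds (0 : ℝ) one_pos] with w hw d
      rw [Metric.mem_closedBall, dist_zero_right] at hw
      rw [norm_mul, norm_pow, Real.norm_eq_abs]
      exact mul_le_of_le_one_right (abs_nonneg _) (pow_le_one₀ (norm_nonneg w) hw))
  have hconst : eulerCoeff x 0 * 0 ^ 0 = 1 := by simp [eulerCoeff, qPoch]
  rwa [tsum_eq_single 0 fun d hd => by simp [hd], hconst] at key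

end Euler

lemma eq_prod_mul_of_forall_eq_one_add_mul {x : ℝ} {f : ℝ → ℝ}
    (hf : ∀ z, f z = (1 + z) * f (x * z)) (z : ℝ) (n : ℕ) :
    f z = (∏ i ∈ range n, (1 + x ^ i * z)) * f (x ^ n * z) := by
  induction n with
  | zero => simp
  | succ n ih => rw [ih, hf (x ^ n * z), prod_range_succ, pow_succ', mul_assoc x, mul_assoc]

lemma eq_of_forall_eq_one_add_mul {x : ℝ} (hx : |x| < 1) {f g : ℝ → ℝ}
    (hf : ∀ z, f z = (1 + z) * f (x * z)) (hg : ∀ z, g z = (1 + z) * g (x * z))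
    (hf₀ : Tendsto f (𝓝 0) (𝓝 1)) (hg₀ : Tendsto g (𝓝 0) (𝓝 1)) : f = g := by
  funext z
  have hcross (n : ℕ) : f z * g (x ^ n * z) = g z * f (x ^ n * z) := by
    rw [eq_prod_mul_of_forall_eq_one_add_mul hf z n, eq_prod_mul_of_forall_eq_one_add_mul hg z n]
    ring
  have hseq : Tendsto (fun n : ℕ => x ^ n * z) atTop (𝓝 0) := by
    simpa using (tendsto_pow_atTop_nhds_zero_of_abs_lt_one hx).mul_const z
  have hleft := (hg₀.comp hseq).const_mul (f z)
  have hright := (hf₀.comp hseq).const_mul (g z)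
  simp only [mul_one, Function.comp_def, ← hcross] at hleft hright
  exact tendsto_nhds_unique hleft hright

theorem eulerSeries_eq_qPochInf {x : ℝ} (hx : |x| < 1) (z : ℝ) :
    eulerSeries x z = qPochInf (-z) x := by
  refine congrFun (eq_of_forall_eq_one_add_mul (g := fun z => qPochInf (-z) x) hx
    (eulerSeries_eq_one_add_mul hx) (fun z => ?_) (tendsto_eulerSeries_nhds_zero hx) ?_) z
  · rw [qPochInf_eq_one_sub_mul hx, sub_neg_eq_add, neg_mul, mul_comm z]
  · exact (tendsto_qPochInf_nhds_zero hx).comp (continuous_neg.tendsto' 0 0 neg_zero)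

lemma abs_inv_lt_one_of_one_lt {q : ℝ} (hq : 1 < q) : |q⁻¹| < 1 := by
  rw [abs_inv, abs_of_pos (zero_lt_one.trans hq)]
  exact inv_lt_one_of_one_lt₀ hq

lemma rpow_grassMu_exponent {q θ : ℝ} (hq : 0 < q) (hq₁ : q ≠ 1) (hθ : 0 < θ) (d : ℕ) :
    q ^ (-(1 / 2 : ℝ) * ((d : ℝ) - (1 / 2 - Real.log θ / Real.log q)) ^ 2
        + (1 / 2 : ℝ) * (1 / 2 - Real.log θ / Real.log q) ^ 2)
      = q⁻¹ ^ d.choose 2 * θ⁻¹ ^ d := by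
  have hexponent : -(1 / 2 : ℝ) * ((d : ℝ) - (1 / 2 - Real.log θ / Real.log q)) ^ 2
      + (1 / 2 : ℝ) * (1 / 2 - Real.log θ / Real.log q) ^ 2
      = -(d.choose 2 : ℝ) + Real.logb q θ * -(d : ℝ) := by
    rw [Nat.cast_choose_two, Real.logb]
    ring
  rw [hexponent, Real.rpow_add hq, Real.rpow_mul hq.le, Real.rpow_logb hq hq₁ hθ,
    Real.rpow_neg hq.le, Real.rpow_neg hθ.le, Real.rpow_natCast, Real.rpow_natCast, inv_pow,
    inv_pow]

lemma grassMu_eq_eulerCoeff_mul_pow_div {q θ : ℝ} (hq : 1 < q) (hθ : 0 < θ) (d : ℕ) :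
    grassMu q θ d = eulerCoeff q⁻¹ d * θ⁻¹ ^ d / qPochInf (-θ⁻¹) q⁻¹ := by
  have hx := abs_inv_lt_one_of_one_lt hq
  have htail : qPochInf (q⁻¹ * q⁻¹ ^ d) q⁻¹ ≠ 0 := by
    refine qPochInf_ne_zero hx (mul_pow_ne_one ?_ hx.le)
    rw [← pow_succ']
    simpa [abs_pow] using pow_lt_one₀ (abs_nonneg _) hx d.succ_ne_zero
  rw [grassMu, rpow_grassMu_exponent (zero_lt_one.trans hq) hq.ne' hθ,
    qPochInf_eq_qPoch_mul hx q⁻¹ d, pow_succ', mul_right_comm (qPoch _ _ _),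
    mul_div_mul_right _ _ htail, eulerCoeff, div_mul_eq_mul_div, div_div]

/-- For real `q ≥ 2` and `θ > 0`, `∑_{d=0}^∞ μ(d) = 1`. -/
theorem grassMu_tsum_eq_one (q θ : ℝ) (hq : 2 ≤ q) (hθ : 0 < θ) :
    ∑' d : ℕ, grassMu q θ d = 1 := by
  have hq₁ : 1 < q := by linarith
  have hx := abs_inv_lt_one_of_one_lt hq₁
  have hden : qPochInf (-θ⁻¹) q⁻¹ ≠ 0 := qPochInf_ne_zero hx fun i => by
    rw [neg_mul]
    exact ((neg_nonpos.2 (by positivity)).trans_lt one_pos).ne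
  rw [tsum_congr (grassMu_eq_eulerCoeff_mul_pow_div hq₁ hθ), tsum_div_const, ← eulerSeries,
    eulerSeries_eq_qPochInf hx, div_self hden]
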